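/- Let p₁, p₂ ∈ L be divisible by u. For n ≥ 0 let Γ_n(p) := {(a,b) ∈ (ℂ[z][u]/(u^{n+1}))² : zʲ·a + p·b and z⁻ʲ·b are V-holomorphic modulo u^{n+1}}. Then the function Δ_n(p₁,p₂) := dim_ℂ Γ_n(p₁) − dim_ℂ Γ_n(p₂) is eventually constant in n; i.e. there exists N such that Δ_n(p₁,p₂) = Δ_N(p₁,p₂) for all n ≥ N. -/

import Mathlib

noncomputable section

/-- `L = ℂ[z,z⁻¹][u]`: Laurent polynomials in `z` with polynomial coefficients in `u`,
realised as the algebra of finitely supported ℂ-linear combinations of monomials on the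
exponent monoid `ℤ × ℕ`, where `(s, r)` is the exponent of the monomial `zˢuʳ`. -/
abbrev L : Type := AddMonoidAlgebra ℂ (ℤ × ℕ)

/-- The monomial `zˢ` (`s ∈ ℤ`). -/
def zp (s : ℤ) : L := AddMonoidAlgebra.single (s, 0) 1

/-- The monomial `u`. -/
def uu : L := AddMonoidAlgebra.single (0, 1) 1

/-- `f` is V-holomorphic: every monomial `zˢuʳ` occurring in `f` satisfies `s ≤ k·r`,
i.e. `f` is holomorphic in the coordinates `(z⁻¹, zᵏu)` of the chart `V` of `Z_k`. -/
def VHol (k : ℕ) (f : L) : Prop := ∀ (s : ℤ) (r : ℕ), f.coeff (s, r) ≠ 0 → s ≤ (k : ℤ) * r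

/-- `f` lies in `ℂ[z,u] ⊆ L`, i.e. is holomorphic on the chart `U`. -/
def MemPolyRing (f : L) : Prop := ∀ (s : ℤ) (r : ℕ), f.coeff (s, r) ≠ 0 → 0 ≤ s

/-- Sections of the bundle `E` determined by `(j,p)` over the n-th infinitesimal neighbourhood
of the zero section: pairs `(a,b)` of polynomials in `ℂ[z][u]/(u^{n+1})` (represented by their
canonical representatives, supported in u-degrees `≤ n`) such that `zʲ·a + p·b` and `z⁻ʲ·b`
are V-holomorphic modulo `u^{n+1}`. -/
def GammaSet (k j n : ℕ) (p : L) : Set (L × L) :=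
  {x | MemPolyRing x.1 ∧ MemPolyRing x.2 ∧
       (∀ (s : ℤ) (r : ℕ), n < r → x.1.coeff (s, r) = 0) ∧
       (∀ (s : ℤ) (r : ℕ), n < r → x.2.coeff (s, r) = 0) ∧
       (∀ (s : ℤ) (r : ℕ), r ≤ n → (zp (j : ℤ) * x.1 + p * x.2).coeff (s, r) ≠ 0 → s ≤ (k : ℤ) * r) ∧
       (∀ (s : ℤ) (r : ℕ), r ≤ n → (zp (-(j : ℤ)) * x.2).coeff (s, r) ≠ 0 → s ≤ (k : ℤ) * r)}

/-- `Γ_n(p) = H⁰(ℓ⁽ⁿ⁾; E⁽ⁿ⁾)` as a ℂ-subspace of `L × L` (the set `GammaSet` is a subspace,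
realised here as its span). -/
def Gamma (k j n : ℕ) (p : L) : Submodule ℂ (L × L) := Submodule.span ℂ (GammaSet k j n p)

/-!
For `n ≥ j`, truncation to `u`-degrees `≤ j` maps `Γ_n(p)` onto `Γ_j(p)`, so
`dim Γ_n(p) = dim Γ_j(p) + dim K_n(p)`, where `K_n(p)` consists of the sections vanishing in
`u`-degrees `≤ j`. In a `u`-degree `r > j` we have `k r ≥ r > j`, so every monomial `zˢuʳ` that
obstructs `V`-holomorphy of `zʲ a + p b` has `s ≥ j` and can be cancelled by changing `a`.
Concretely, the shear `(a, b) ↦ (a + [z⁻ʲ q b], b)`, with `[·]` keeping the monomials of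
nonnegative `z`-degree and `u`-degree in `(j, n]`, turns the condition for `p + q` on the old pair
into the condition for `p` on the new one in those degrees. With `q = -p` it lifts `Γ_j(p)` into
`Γ_n(p)`, and with `q = p₁ - p₂` it maps `K_n(p₁)` injectively into `K_n(p₂)` (and symmetrically),
so `Δ_n = Δ_j` for all `n ≥ j`.
-/

open AddMonoidAlgebra Module

lemma coeff_zp_mul (d : ℤ) (f : L) (s : ℤ) (r : ℕ) :
    (zp d * f).coeff (s, r) = f.coeff (s - d, r) := by
  rw [zp, coeff_single_mul_eq_mul_coeff (s - d, r), one_mul]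
  rintro ⟨s', r'⟩ -
  simp only [Prod.mk_add_mk, Prod.mk.injEq, zero_add]
  omega

lemma exists_coeff_ne_zero_of_coeff_mul_ne_zero {f g : L} {s : ℤ} {r : ℕ}
    (h : (f * g).coeff (s, r) ≠ 0) :
    ∃ s₁ s₂ r₁ r₂, f.coeff (s₁, r₁) ≠ 0 ∧ g.coeff (s₂, r₂) ≠ 0 ∧ s₁ + s₂ = s ∧ r₁ + r₂ = r := by
  classical
  obtain ⟨q₁, hq₁, q₂, hq₂, hq⟩ :=
    Finset.mem_add.1 (support_coeff_mul_subset f g (Finsupp.mem_support_iff.2 h))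
  exact ⟨q₁.1, q₂.1, q₁.2, q₂.2, Finsupp.mem_support_iff.1 hq₁, Finsupp.mem_support_iff.1 hq₂,
    congrArg Prod.fst hq, congrArg Prod.snd hq⟩

lemma coeff_mul_eq_zero_of_forall_le (f : L) {g : L} {s : ℤ} {r : ℕ}
    (hg : ∀ s' r', r' ≤ r → g.coeff (s', r') = 0) : (f * g).coeff (s, r) = 0 := by
  by_contra h
  obtain ⟨-, s₂, r₁, r₂, -, hne, -, hr⟩ := exists_coeff_ne_zero_of_coeff_mul_ne_zero h
  exact hne (hg s₂ r₂ (by omega))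

def sectionSubmodule (k j n : ℕ) (p : L) : Submodule ℂ (L × L) :=
  let poly : Submodule ℂ L := supported ℂ ℂ {q | 0 ≤ q.1} ⊓ supported ℂ ℂ {q | q.2 ≤ n}
  let vHol : Submodule ℂ L := supported ℂ ℂ {q | q.2 ≤ n → q.1 ≤ k * q.2}
  poly.prod poly ⊓ vHol.comap ((LinearMap.mulLeft ℂ (zp j)).coprod (LinearMap.mulLeft ℂ p)) ⊓
    vHol.comap (LinearMap.mulLeft ℂ (zp (-j)) ∘ₗ LinearMap.snd ℂ L L)

lemma coe_sectionSubmodule (k j n : ℕ) (p : L) :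
    (sectionSubmodule k j n p : Set (L × L)) = GammaSet k j n p := by
  ext x
  simp only [sectionSubmodule, SetLike.mem_coe, Submodule.mem_inf, Submodule.mem_prod,
    Submodule.mem_comap, mem_supported', Set.mem_ofPred_eq, Prod.forall, GammaSet, MemPolyRing,
    LinearMap.coprod_apply, LinearMap.coe_comp, Function.comp_apply, LinearMap.mulLeft_apply,
    LinearMap.snd_apply, ← not_lt, ne_eq, not_imp_not]
  tauto

lemma mem_Gamma {k j n : ℕ} {p : L} {x : L × L} : x ∈ Gamma k j n p ↔ x ∈ GammaSet k j n p := by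
  rw [Gamma, ← coe_sectionSubmodule, Submodule.span_eq]; rfl

lemma exists_coeff_fst_le (p : L) : ∃ M : ℕ, ∀ s r, p.coeff (s, r) ≠ 0 → s ≤ M := by
  obtain ⟨M, hM⟩ := (p.coeff.support.image Prod.fst).exists_le
  refine ⟨M.toNat, fun s r h => (hM s ?_).trans (Int.self_le_toNat M)⟩
  exact Finset.mem_image_of_mem Prod.fst (Finsupp.mem_support_iff.2 h)

namespace GammaSet

variable {k j n : ℕ} {p : L} {x : L × L}

lemma snd_coeff_bound (hx : x ∈ GammaSet k j n p) {s : ℤ} {r : ℕ} (h : x.2.coeff (s, r) ≠ 0) :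
    r ≤ n ∧ s ≤ k * r + j := by
  obtain ⟨-, -, -, h4, -, h6⟩ := hx
  have hr : r ≤ n := by by_contra hr; exact h (h4 s r (by omega))
  have := h6 (s - j) r hr (by rwa [coeff_zp_mul, sub_neg_eq_add, sub_add_cancel])
  exact ⟨hr, by omega⟩

lemma fst_coeff_bound {M : ℕ} (hM : ∀ s r, p.coeff (s, r) ≠ 0 → s ≤ M)
    (hx : x ∈ GammaSet k j n p) {s : ℤ} {r : ℕ} (h : x.1.coeff (s, r) ≠ 0) :
    r ≤ n ∧ s ≤ k * n + M := by
  have hkn : ∀ r ≤ n, (k * r : ℤ) ≤ k * n := fun r hr => by gcongr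
  have hr : r ≤ n := by by_contra hr; exact h (hx.2.2.1 s r (by omega))
  refine ⟨hr, ?_⟩
  have hsplit : (zp j * x.1 + p * x.2).coeff (s + j, r)
      = x.1.coeff (s, r) + (p * x.2).coeff (s + j, r) := by
    rw [coeff_add, Finsupp.add_apply, coeff_zp_mul, add_sub_cancel_right]
  by_cases hc : (zp j * x.1 + p * x.2).coeff (s + j, r) = 0
  · have hpb : (p * x.2).coeff (s + j, r) ≠ 0 := by
      intro h0; rw [h0, add_zero, hc] at hsplit; exact h hsplit.symm
    obtain ⟨s₁, s₂, r₁, r₂, hp, hb, hs, hr'⟩ := exists_coeff_ne_zero_of_coeff_mul_ne_zero hpb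
    have := hM s₁ r₁ hp
    have := (snd_coeff_bound hx hb).2
    have := hkn r₂ (by omega)
    omega
  · have := hx.2.2.2.2.1 (s + j) r hr hc
    have := hkn r hr
    omega

end GammaSet

instance (k j n : ℕ) (p : L) : FiniteDimensional ℂ (Gamma k j n p) := by
  obtain ⟨M, hM⟩ := exists_coeff_fst_le p
  let box : Submodule ℂ L := supported ℂ ℂ (Set.Icc (0, 0) ((k * n + j + M : ℤ), n))
  have hbox (f : L) (hf : ∀ s r, f.coeff (s, r) ≠ 0 → 0 ≤ s ∧ r ≤ n ∧ s ≤ k * n + j + M) :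
      f ∈ box := by
    rw [mem_supported']
    rintro ⟨s, r⟩ hsr
    by_contra h
    obtain ⟨h1, h2, h3⟩ := hf s r h
    exact hsr ⟨⟨h1, Nat.zero_le r⟩, ⟨h3, h2⟩⟩
  have : FiniteDimensional ℂ box := (supportedEquivFinsupp _).symm.finiteDimensional
  have : FiniteDimensional ℂ (box.prod box) := by rw [LinearMap.prod_eq_sup_map]; infer_instance
  refine Submodule.finiteDimensional_of_le (S₂ := box.prod box) fun x hx => ?_
  rw [mem_Gamma] at hx
  refine ⟨hbox _ fun s r h => ?_, hbox _ fun s r h => ?_⟩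
  · have := GammaSet.fst_coeff_bound hM hx h
    exact ⟨hx.1 s r h, by omega⟩
  · have := GammaSet.snd_coeff_bound hx h
    have : (k * r : ℤ) ≤ k * n := by gcongr; exact_mod_cast this.1
    exact ⟨hx.2.1 s r h, by omega⟩

open scoped Classical in
def restrictCoeff (S : Set (ℤ × ℕ)) : L →ₗ[ℂ] L where
  toFun f := ofCoeff (f.coeff.filter (· ∈ S))
  map_add' f g := by ext; simp
  map_smul' c f := by ext; simp

open scoped Classical in
lemma coeff_restrictCoeff (S : Set (ℤ × ℕ)) (f : L) (q : ℤ × ℕ) :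
    (restrictCoeff S f).coeff q = if q ∈ S then f.coeff q else 0 :=
  Finsupp.filter_apply ..

def truncRows (N : ℕ) : L →ₗ[ℂ] L := restrictCoeff {q | q.2 ≤ N}

lemma coeff_truncRows (N : ℕ) (f : L) (s : ℤ) (r : ℕ) :
    (truncRows N f).coeff (s, r) = if r ≤ N then f.coeff (s, r) else 0 := by
  rw [truncRows, coeff_restrictCoeff]; simp only [Set.mem_ofPred_eq]; congr

lemma coeff_mul_truncRows (f g : L) {N : ℕ} {s : ℤ} {r : ℕ} (hr : r ≤ N) :
    (f * truncRows N g).coeff (s, r) = (f * g).coeff (s, r) := by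
  rw [← sub_eq_zero, ← Finsupp.sub_apply, ← coeff_sub, ← mul_sub]
  refine coeff_mul_eq_zero_of_forall_le f fun s' r' hr' => ?_
  rw [coeff_sub, Finsupp.sub_apply, coeff_truncRows, if_pos (hr'.trans hr), sub_self]

lemma truncRows_eq_self {N : ℕ} {f : L} (hf : ∀ s r, N < r → f.coeff (s, r) = 0) :
    truncRows N f = f := by
  ext ⟨s, r⟩
  rw [coeff_truncRows]
  split_ifs with hr
  · rfl
  · exact (hf s r (by omega)).symm

lemma coeff_eq_zero_of_truncRows_eq_zero {N : ℕ} {f : L} (hf : truncRows N f = 0) {s : ℤ} {r : ℕ}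
    (hr : r ≤ N) : f.coeff (s, r) = 0 := by
  simpa [coeff_truncRows, hr] using congrArg (fun g : L => g.coeff (s, r)) hf

def truncPair (N : ℕ) : L × L →ₗ[ℂ] L × L := (truncRows N).prodMap (truncRows N)

lemma truncPair_apply (N : ℕ) (x : L × L) : truncPair N x = (truncRows N x.1, truncRows N x.2) :=
  rfl

lemma truncPair_mem_GammaSet {k j n N : ℕ} {p : L} (hN : N ≤ n) {x : L × L}
    (hx : x ∈ GammaSet k j n p) : truncPair N x ∈ GammaSet k j N p := by
  obtain ⟨h1, h2, -, -, h5, h6⟩ := hx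
  rw [truncPair_apply]
  have hne : ∀ {f : L} {s r}, (truncRows N f).coeff (s, r) ≠ 0 → r ≤ N ∧ f.coeff (s, r) ≠ 0 :=
    fun h => by rw [coeff_truncRows] at h; split_ifs at h with hr <;> simp_all
  refine ⟨fun s r h => h1 s r (hne h).2, fun s r h => h2 s r (hne h).2,
    fun s r hr => ?_, fun s r hr => ?_, fun s r hr h => h5 s r (hr.trans hN) ?_,
    fun s r hr h => h6 s r (hr.trans hN) ?_⟩
  · by_contra h; exact absurd (hne h).1 (by omega)
  · by_contra h; exact absurd (hne h).1 (by omega)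
  · rwa [coeff_add, Finsupp.add_apply, coeff_mul_truncRows _ _ hr, coeff_mul_truncRows _ _ hr,
      ← Finsupp.add_apply, ← coeff_add] at h
  · rwa [coeff_mul_truncRows _ _ hr] at h

def shearEquiv {R M N : Type*} [Semiring R] [AddCommGroup M] [AddCommMonoid N] [Module R M]
    [Module R N] (f : N →ₗ[R] M) : (M × N) ≃ₗ[R] (M × N) where
  toFun x := (x.1 + f x.2, x.2)
  invFun x := (x.1 - f x.2, x.2)
  map_add' x y := by simp only [Prod.fst_add, Prod.snd_add, map_add, Prod.mk_add_mk]; abel_nf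
  map_smul' c x := by simp
  left_inv x := by simp
  right_inv x := by simp

lemma shearEquiv_apply {R M N : Type*} [Semiring R] [AddCommGroup M] [AddCommMonoid N]
    [Module R M] [Module R N] (f : N →ₗ[R] M) (x : M × N) :
    shearEquiv f x = (x.1 + f x.2, x.2) :=
  rfl

def correction (j n : ℕ) (q : L) : L →ₗ[ℂ] L :=
  restrictCoeff {t | 0 ≤ t.1 ∧ j < t.2 ∧ t.2 ≤ n} ∘ₗ LinearMap.mulLeft ℂ (zp (-j) * q)

lemma coeff_correction (j n : ℕ) (q b : L) (s : ℤ) (r : ℕ) :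
    (correction j n q b).coeff (s, r)
      = if 0 ≤ s ∧ j < r ∧ r ≤ n then (q * b).coeff (s + j, r) else 0 := by
  rw [correction, LinearMap.comp_apply, coeff_restrictCoeff, LinearMap.mulLeft_apply, mul_assoc,
    coeff_zp_mul, sub_neg_eq_add]
  simp only [Set.mem_ofPred_eq]
  congr

section Shear

variable {k j n : ℕ} {p q a b : L}

lemma MemPolyRing.add_correction (ha : MemPolyRing a) : MemPolyRing (a + correction j n q b) := by
  intro s r h
  rw [coeff_add, Finsupp.add_apply, coeff_correction] at h
  split_ifs at h with hc
  · exact hc.1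
  · exact ha s r (by simpa using h)

lemma coeff_add_correction_of_le {s : ℤ} {r : ℕ} (hr : r ≤ j) :
    (a + correction j n q b).coeff (s, r) = a.coeff (s, r) := by
  rw [coeff_add, Finsupp.add_apply, coeff_correction, if_neg (by omega), add_zero]

lemma coeff_add_correction_of_lt {s : ℤ} {r : ℕ} (hr : n < r) :
    (a + correction j n q b).coeff (s, r) = a.coeff (s, r) := by
  rw [coeff_add, Finsupp.add_apply, coeff_correction, if_neg (by omega), add_zero]

lemma vHol_add_correction (hk : 1 ≤ k)
    (hlow : ∀ s r, r ≤ j → (zp j * a + p * b).coeff (s, r) ≠ 0 → s ≤ k * r)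
    (hhigh : ∀ s r, j < r → r ≤ n → (zp j * a + (q + p) * b).coeff (s, r) ≠ 0 → s ≤ k * r) :
    ∀ s r, r ≤ n → (zp j * (a + correction j n q b) + p * b).coeff (s, r) ≠ 0 → s ≤ k * r := by
  intro s r hrn h
  rw [coeff_add, Finsupp.add_apply, coeff_zp_mul] at h
  rcases le_or_gt r j with hrj | hrj
  · rw [coeff_add_correction_of_le hrj, ← coeff_zp_mul, ← Finsupp.add_apply, ← coeff_add] at h
    exact hlow s r hrj h
  rcases lt_or_ge s j with hs | hs
  · have : (r : ℤ) ≤ k * r := le_mul_of_one_le_left (by positivity) (by exact_mod_cast hk)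
    omega
  refine hhigh s r hrj hrn ?_
  rw [coeff_add, Finsupp.add_apply, coeff_correction, if_pos ⟨by omega, hrj, hrn⟩,
    sub_add_cancel] at h
  rwa [add_mul, coeff_add, coeff_add, Finsupp.add_apply, Finsupp.add_apply, coeff_zp_mul,
    ← add_assoc]

end Shear

lemma truncPair_shearEquiv_correction (j n : ℕ) (q : L) (x : L × L) :
    truncPair j (shearEquiv (correction j n q) x) = truncPair j x := by
  rw [shearEquiv_apply, truncPair_apply, truncPair_apply]
  congr 1
  ext ⟨s, r⟩
  rw [coeff_truncRows, coeff_truncRows]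
  split_ifs with hr
  · exact coeff_add_correction_of_le hr
  · rfl

section Sections

variable {k j n : ℕ} {p : L}

lemma shearEquiv_correction_mem_GammaSet (hk : 1 ≤ k) (hjn : j ≤ n) {y : L × L}
    (hy : y ∈ GammaSet k j j p) : shearEquiv (correction j n (-p)) y ∈ GammaSet k j n p := by
  obtain ⟨h1, h2, h3, h4, h5, h6⟩ := hy
  rw [shearEquiv_apply]
  refine ⟨h1.add_correction, h2, fun s r hr => ?_, fun s r hr => h4 s r (by omega),
    vHol_add_correction hk h5 fun s r hrj _ h => ?_, fun s r hr h => ?_⟩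
  · rw [coeff_add_correction_of_lt hr, h3 s r (by omega)]
  · rw [neg_add_cancel, zero_mul, add_zero, coeff_zp_mul, h3 _ r hrj] at h
    exact absurd rfl h
  · rcases le_or_gt r j with hrj | hrj
    · exact h6 s r hrj h
    · rw [coeff_zp_mul, h4 _ r hrj] at h
      exact absurd rfl h

lemma map_truncPair_Gamma (hk : 1 ≤ k) (hjn : j ≤ n) :
    (Gamma k j n p).map (truncPair j) = Gamma k j j p := by
  refine le_antisymm (Submodule.map_le_iff_le_comap.2 fun x hx => ?_) fun y hy => ?_
  · exact mem_Gamma.2 (truncPair_mem_GammaSet hjn (mem_Gamma.1 hx))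
  · rw [mem_Gamma] at hy
    refine ⟨_, mem_Gamma.2 (shearEquiv_correction_mem_GammaSet hk hjn hy), ?_⟩
    rw [truncPair_shearEquiv_correction, truncPair_apply, truncRows_eq_self hy.2.2.1,
      truncRows_eq_self hy.2.2.2.1]

def truncKernel (k j n : ℕ) (p : L) : Submodule ℂ (L × L) :=
  Gamma k j n p ⊓ LinearMap.ker (truncPair j)

lemma shearEquiv_correction_mem_truncKernel (hk : 1 ≤ k) {p₁ p₂ : L} {x : L × L}
    (hx : x ∈ truncKernel k j n p₁) :
    shearEquiv (correction j n (p₁ - p₂)) x ∈ truncKernel k j n p₂ := by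
  simp only [truncKernel, Submodule.mem_inf, LinearMap.mem_ker, mem_Gamma] at hx ⊢
  obtain ⟨⟨h1, h2, h3, h4, h5, h6⟩, hx₀⟩ := hx
  rw [truncPair_apply, Prod.mk_eq_zero] at hx₀
  rw [shearEquiv_apply]
  refine ⟨⟨h1.add_correction, h2, fun s r hr => ?_, h4,
    vHol_add_correction hk (fun s r hr h => ?_) fun s r _ hrn h => h5 s r hrn ?_, h6⟩, ?_⟩
  · rw [coeff_add_correction_of_lt hr, h3 s r hr]
  · rw [coeff_add, Finsupp.add_apply, coeff_zp_mul, coeff_eq_zero_of_truncRows_eq_zero hx₀.1 hr,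
      coeff_mul_eq_zero_of_forall_le _ fun s' r' hr' =>
        coeff_eq_zero_of_truncRows_eq_zero hx₀.2 (hr'.trans hr), add_zero] at h
    exact absurd rfl h
  · rwa [sub_add_cancel] at h
  · rw [← shearEquiv_apply, truncPair_shearEquiv_correction, truncPair_apply, hx₀.1, hx₀.2,
      Prod.mk_zero_zero]

end Sections

theorem finrank_map_add_finrank_inf_ker {K V W : Type*} [DivisionRing K] [AddCommGroup V]
    [Module K V] [AddCommGroup W] [Module K W] (f : V →ₗ[K] W) (P : Submodule K V)
    [FiniteDimensional K P] :
    finrank K (P.map f) + finrank K (P ⊓ LinearMap.ker f : Submodule K V) = finrank K P := by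
  have h := LinearMap.finrank_range_add_finrank_ker (f.domRestrict P)
  rwa [LinearMap.range_domRestrict, LinearMap.ker_domRestrict, ← top_inf_eq (Submodule.comap _ _),
    ← Submodule.comap_subtype_self P, ← Submodule.comap_inf,
    LinearEquiv.finrank_eq (Submodule.comapSubtypeEquivOfLe inf_le_left)] at h

lemma finrank_Gamma_eq {k j n : ℕ} (hk : 1 ≤ k) (hjn : j ≤ n) (p : L) :
    finrank ℂ (Gamma k j n p) = finrank ℂ (Gamma k j j p) + finrank ℂ (truncKernel k j n p) := by
  rw [← map_truncPair_Gamma hk hjn, truncKernel, finrank_map_add_finrank_inf_ker]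

lemma finrank_truncKernel_le {k j n : ℕ} (hk : 1 ≤ k) (p₁ p₂ : L) :
    finrank ℂ (truncKernel k j n p₁) ≤ finrank ℂ (truncKernel k j n p₂) := by
  have : FiniteDimensional ℂ (truncKernel k j n p₂) :=
    Submodule.finiteDimensional_of_le inf_le_left
  rw [← LinearEquiv.finrank_map_eq (shearEquiv (correction j n (p₁ - p₂)))]
  exact Submodule.finrank_mono (Submodule.map_le_iff_le_comap.2 fun x hx =>
    shearEquiv_correction_mem_truncKernel hk hx)

lemma finrank_truncKernel_eq {k : ℕ} (hk : 1 ≤ k) (j n : ℕ) (p₁ p₂ : L) :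
    finrank ℂ (truncKernel k j n p₁) = finrank ℂ (truncKernel k j n p₂) :=
  (finrank_truncKernel_le hk p₁ p₂).antisymm (finrank_truncKernel_le hk p₂ p₁)

theorem delta_eventually_constant_general (k : ℕ) (hk : 1 ≤ k) (j : ℕ) (p₁ p₂ : L) :
    ∃ N : ℕ, ∀ n, N ≤ n →
      (Module.finrank ℂ (Gamma k j n p₁) : ℤ) - Module.finrank ℂ (Gamma k j n p₂)
        = (Module.finrank ℂ (Gamma k j N p₁) : ℤ) - Module.finrank ℂ (Gamma k j N p₂) := by
  refine ⟨j, fun n hjn => ?_⟩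
  rw [finrank_Gamma_eq hk hjn p₁, finrank_Gamma_eq hk hjn p₂,
    finrank_truncKernel_eq hk j n p₁ p₂]
  push_cast
  ring

/-- For `p₁, p₂ ∈ L` divisible by `u`, the difference
`Δ_n(p₁,p₂) = dim_ℂ Γ_n(p₁) − dim_ℂ Γ_n(p₂)` is eventually constant in `n`. -/
theorem delta_eventually_constant (k : ℕ) (hk : 1 ≤ k) (j : ℕ) (p₁ p₂ : L)
    (hu₁ : ∀ (s : ℤ) (r : ℕ), p₁.coeff (s, r) ≠ 0 → 1 ≤ r)
    (hu₂ : ∀ (s : ℤ) (r : ℕ), p₂.coeff (s, r) ≠ 0 → 1 ≤ r) :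
    ∃ N : ℕ, ∀ n, N ≤ n →
      (Module.finrank ℂ (Gamma k j n p₁) : ℤ) - Module.finrank ℂ (Gamma k j n p₂)
        = (Module.finrank ℂ (Gamma k j N p₁) : ℤ) - Module.finrank ℂ (Gamma k j N p₂) :=
  delta_eventually_constant_general k hk j p₁ p₂
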